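/- With ρ_x as above, for any two distinct syndromes x ≠ x' in GF(2)^{r+m}, every nonzero matrix entry of the difference Δρ = ρ_x − ρ_{x'} (in the Hadamard-rotated basis) occurs at a position (α, α') with α ⊕ α' a nonzero element of C₀^⊥. In particular, all diagonal entries of Δρ vanish, and if the minimum Hamming weight of nonzero elements of C₀^⊥ exceeds D, then (Δρ)_{α,α'} ≠ 0 implies d(α, α') > D. -/

import Mathlib

open Matrix

/-- The GF(2) inner product `α ⊙ β = ⊕ᵢ αᵢ βᵢ`. -/
def dotp {N : ℕ} (α β : Fin N → ZMod 2) : ZMod 2 := ∑ i, α i * β i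

/-- The sign `(-1)^z ∈ ℂ` attached to `z ∈ GF(2)`. -/
def sgn (z : ZMod 2) : ℂ := (-1 : ℂ) ^ z.val

/-- The Hadamard-rotated basis vector `|φ_α⟩ = H^{⊗N}|ψ_α⟩`. -/
noncomputable def hcol {N : ℕ} (α : Fin N → ZMod 2) : (Fin N → ZMod 2) → ℂ :=
  fun β => ((Real.sqrt 2 : ℂ))⁻¹ ^ N * sgn (dotp α β)

/-- The uniform mixture of computational-basis projectors over `S ⊆ GF(2)^N`. -/
noncomputable def mix {N : ℕ} (S : Set (Fin N → ZMod 2)) :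
    Matrix (Fin N → ZMod 2) (Fin N → ZMod 2) ℂ :=
  (Nat.card S : ℂ)⁻¹ • ∑ β ∈ (Set.toFinite S).toFinset, Matrix.single β β 1

/-! In the Hadamard basis, `⟨φ_α| ρ_x |φ_α'⟩` is `2^{-N}` times the average over the coset
`C_x = f⁻¹(x)` of the character `β ↦ (-1)^{(α ⊕ α') ⊙ β}`. If some `δ ∈ C₀ = ker f` has
`(α ⊕ α') ⊙ δ = 1`, translating the coset by `δ` flips the sign of that sum, so it vanishes;
if `α ⊕ α' = 0` the average is `1` for every coset (nonempty by surjectivity of `f`). So the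
entries of `ρ_x - ρ_{x'}` can only be nonzero where `α ⊕ α' ∈ C₀^⊥ \ {0}`, and the Hamming
weight of `α ⊕ α'` is `d(α, α')`. -/

lemma sgn_add (a b : ZMod 2) : sgn (a + b) = sgn a * sgn b := by
  rw [sgn, ZMod.val_add, ← neg_one_pow_eq_pow_mod_two, pow_add, sgn, sgn]

lemma sgn_of_ne_zero {z : ZMod 2} (hz : z ≠ 0) : sgn z = -1 := by
  obtain rfl : z = 1 := by revert z; decide
  simp [sgn, ZMod.val_one]

lemma hammingDist_add_zero {ι : Type*} [Fintype ι] (α α' : ι → ZMod 2) :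
    hammingDist (α + α') 0 = hammingDist α α' := by
  rw [hammingDist_zero_right, hammingDist_eq_hammingNorm, ZModModule.neg_eq_self]

section

variable {N : ℕ}

lemma dotp_eq_dotProduct (α β : Fin N → ZMod 2) : dotp α β = α ⬝ᵥ β := rfl

lemma star_hcol_mul_hcol (α α' β : Fin N → ZMod 2) :
    star (hcol α β) * hcol α' β = (2⁻¹ : ℂ) ^ N * sgn (dotp (α + α') β) := by
  have hsqrt : ((Real.sqrt 2 : ℂ))⁻¹ * ((Real.sqrt 2 : ℂ))⁻¹ = 2⁻¹ := by
    rw [← mul_inv, ← Complex.ofReal_mul, Real.mul_self_sqrt zero_le_two]; norm_num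
  have hsgn (z : ZMod 2) : star (sgn z) = sgn z := by simp [sgn]
  simp only [hcol, star_mul', star_pow, star_inv₀, Complex.star_def, Complex.conj_ofReal]
  rw [← Complex.star_def, hsgn, dotp_eq_dotProduct, dotp_eq_dotProduct, dotp_eq_dotProduct,
    add_dotProduct, sgn_add, ← hsqrt, mul_pow]
  ring

lemma star_dotProduct_mix_mulVec (S : Set (Fin N → ZMod 2)) (u v : (Fin N → ZMod 2) → ℂ) :
    star u ⬝ᵥ (mix S *ᵥ v) =
      (Nat.card S : ℂ)⁻¹ * ∑ β ∈ (Set.toFinite S).toFinset, star (u β) * v β := by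
  simp only [mix, smul_mulVec, sum_mulVec, single_mulVec_eq, dotProduct_sum, dotProduct_smul,
    dotProduct_single, Pi.star_apply, smul_eq_mul, one_mul, mul_one, Finset.mul_sum, mul_comm (v _)]

lemma dotProduct_mix_mulVec_hcol (S : Set (Fin N → ZMod 2)) (α α' : Fin N → ZMod 2) :
    star (hcol α) ⬝ᵥ (mix S *ᵥ hcol α') = (Nat.card S : ℂ)⁻¹ * (2⁻¹ : ℂ) ^ N *
      ∑ β ∈ (Set.toFinite S).toFinset, sgn (dotp (α + α') β) := by
  simp_rw [star_dotProduct_mix_mulVec, star_hcol_mul_hcol, ← Finset.mul_sum, mul_assoc]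

lemma dotProduct_mix_mulVec_hcol_of_add_eq_zero {S : Set (Fin N → ZMod 2)}
    (hS : S.Nonempty) {α α' : Fin N → ZMod 2} (h : α + α' = 0) :
    star (hcol α) ⬝ᵥ (mix S *ᵥ hcol α') = (2⁻¹ : ℂ) ^ N := by
  have hcard : (Nat.card S : ℂ) ≠ 0 := by
    exact_mod_cast (Nat.card_pos_iff.mpr ⟨hS.to_subtype, S.toFinite.to_subtype⟩).ne'
  have hsgn (β : Fin N → ZMod 2) : sgn (dotp 0 β) = 1 := by
    simp [dotp_eq_dotProduct, sgn]
  have hcard_eq : ((Set.toFinite S).toFinset.card : ℂ) = Nat.card S := by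
    rw [Nat.card_coe_set_eq, Set.ncard_eq_toFinset_card]
  rw [dotProduct_mix_mulVec_hcol, h]
  simp only [hsgn, Finset.sum_const, nsmul_eq_mul, mul_one, hcard_eq]
  field_simp

lemma sum_sgn_dotp_coset_eq_zero {ι : Type*} (f : Matrix ι (Fin N) (ZMod 2))
    (x : ι → ZMod 2) {γ δ : Fin N → ZMod 2} (hδ : f *ᵥ δ = 0) (hγδ : dotp γ δ ≠ 0) :
    ∑ β ∈ (Set.toFinite {β | f *ᵥ β = x}).toFinset, sgn (dotp γ β) = 0 := by
  set s := ∑ β ∈ (Set.toFinite {β | f *ᵥ β = x}).toFinset, sgn (dotp γ β)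
  have hshift : s = ∑ β ∈ (Set.toFinite {β | f *ᵥ β = x}).toFinset, sgn (dotp γ (β + δ)) := by
    refine (Finset.sum_nbij' (· + δ) (· + δ) ?_ ?_ ?_ ?_ ?_).symm <;>
      simp [mulVec_add, hδ, add_assoc, ZModModule.add_self]
  have hneg : ∑ β ∈ (Set.toFinite {β | f *ᵥ β = x}).toFinset, sgn (dotp γ (β + δ)) = -s := by
    simp_rw [dotp_eq_dotProduct, dotProduct_add, sgn_add, ← dotp_eq_dotProduct, sgn_of_ne_zero hγδ,
      mul_neg_one, Finset.sum_neg_distrib]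
    rfl
  exact CharZero.eq_neg_self_iff.mp (hshift.trans hneg)

lemma dotProduct_mix_coset_mulVec_hcol_of_dotp_ne_zero {ι : Type*}
    (f : Matrix ι (Fin N) (ZMod 2)) (x : ι → ZMod 2) {α α' δ : Fin N → ZMod 2}
    (hδ : f *ᵥ δ = 0) (h : dotp (α + α') δ ≠ 0) :
    star (hcol α) ⬝ᵥ (mix {β | f *ᵥ β = x} *ᵥ hcol α') = 0 := by
  rw [dotProduct_mix_mulVec_hcol, sum_sgn_dotp_coset_eq_zero f x hδ h, mul_zero]

end

theorem diff_mix_coset_entries_general (r m N D : ℕ)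
    (f : Matrix (Fin (r + m)) (Fin N) (ZMod 2)) (hf : Function.Surjective f.mulVec)
    (x x' : Fin (r + m) → ZMod 2)
    (hmin : ∀ γ : Fin N → ZMod 2,
      (∀ δ : Fin N → ZMod 2, f.mulVec δ = 0 → dotp γ δ = 0) → γ ≠ 0 →
        D < hammingDist γ 0) :
    (∀ α : Fin N → ZMod 2,
        star (hcol α) ⬝ᵥ ((mix {γ : Fin N → ZMod 2 | f.mulVec γ = x}
          - mix {γ : Fin N → ZMod 2 | f.mulVec γ = x'}) *ᵥ hcol α) = 0)
    ∧ (∀ α α' : Fin N → ZMod 2,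
        star (hcol α) ⬝ᵥ ((mix {γ : Fin N → ZMod 2 | f.mulVec γ = x}
          - mix {γ : Fin N → ZMod 2 | f.mulVec γ = x'}) *ᵥ hcol α') ≠ 0 →
        (∀ δ : Fin N → ZMod 2, f.mulVec δ = 0 → dotp (α + α') δ = 0)
          ∧ α + α' ≠ 0 ∧ D < hammingDist α α') := by
  have hdiag : ∀ α α' : Fin N → ZMod 2, α + α' = 0 →
      star (hcol α) ⬝ᵥ ((mix {γ | f *ᵥ γ = x} - mix {γ | f *ᵥ γ = x'}) *ᵥ hcol α') = 0 := by
    intro α α' h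
    have hcoset (y : Fin (r + m) → ZMod 2) : {γ | f *ᵥ γ = y}.Nonempty := hf y
    rw [sub_mulVec, dotProduct_sub, dotProduct_mix_mulVec_hcol_of_add_eq_zero (hcoset x) h,
      dotProduct_mix_mulVec_hcol_of_add_eq_zero (hcoset x') h, sub_self]
  refine ⟨fun α => hdiag α α (ZModModule.add_self α), fun α α' hne => ?_⟩
  have hdual : ∀ δ : Fin N → ZMod 2, f *ᵥ δ = 0 → dotp (α + α') δ = 0 := by
    intro δ hδ
    by_contra h
    rw [sub_mulVec, dotProduct_sub, dotProduct_mix_coset_mulVec_hcol_of_dotp_ne_zero f x hδ h,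
      dotProduct_mix_coset_mulVec_hcol_of_dotp_ne_zero f x' hδ h, sub_zero] at hne
    exact hne rfl
  have hnz : α + α' ≠ 0 := fun h => hne (hdiag α α' h)
  exact ⟨hdual, hnz, hammingDist_add_zero α α' ▸ hmin _ hdual hnz⟩

/-- For two distinct syndromes `x ≠ x'`, every nonzero Hadamard-basis matrix entry of
`Δρ = ρ_x − ρ_{x'}` occurs at a position `(α,α')` with `α ⊕ α'` a nonzero element of
`C₀^⊥`; in particular all diagonal entries vanish, and if every nonzero element of
`C₀^⊥` has Hamming weight greater than `D` then nonzero entries force `d(α,α') > D`. -/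
theorem diff_mix_coset_entries (r m N D : ℕ)
    (f : Matrix (Fin (r + m)) (Fin N) (ZMod 2)) (hf : Function.Surjective f.mulVec)
    (x x' : Fin (r + m) → ZMod 2) (hxx' : x ≠ x')
    (hmin : ∀ γ : Fin N → ZMod 2,
      (∀ δ : Fin N → ZMod 2, f.mulVec δ = 0 → dotp γ δ = 0) → γ ≠ 0 →
        D < hammingDist γ 0) :
    (∀ α : Fin N → ZMod 2,
        star (hcol α) ⬝ᵥ ((mix {γ : Fin N → ZMod 2 | f.mulVec γ = x}
          - mix {γ : Fin N → ZMod 2 | f.mulVec γ = x'}) *ᵥ hcol α) = 0)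
    ∧ (∀ α α' : Fin N → ZMod 2,
        star (hcol α) ⬝ᵥ ((mix {γ : Fin N → ZMod 2 | f.mulVec γ = x}
          - mix {γ : Fin N → ZMod 2 | f.mulVec γ = x'}) *ᵥ hcol α') ≠ 0 →
        (∀ δ : Fin N → ZMod 2, f.mulVec δ = 0 → dotp (α + α') δ = 0)
          ∧ α + α' ≠ 0 ∧ D < hammingDist α α') :=
  diff_mix_coset_entries_general r m N D f hf x x' hmin
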